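/- Suppose g : ℝʳ → ℝ satisfies |∂g/∂θ_i| ≤ a_i and |∂²g/∂θ_i∂θ_j| ≤ b_{ij} everywhere, and let F(θ) = s_γ(g(θ)) for the softplus s_γ(x) = (1/γ)ln(e^{γx}+1). Then |∂²F/∂θ_i∂θ_j| ≤ b_{ij} + γ a_i a_j everywhere. -/

import Mathlib

/-!
The first partial of `F = s_γ ∘ g` is `σ(γ g) ∂_i g`, with `σ` the logistic sigmoid, so
`∂_j ∂_i F = σ(γ g) ∂_j ∂_i g + γ σ(γ g) (1 - σ(γ g)) ∂_i g ∂_j g`, and `0 ≤ σ ≤ 1`,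
`0 ≤ σ (1 - σ) ≤ 1/4` bound the two coefficients by `1` and `γ`.
-/

open Real

noncomputable def softplus (γ x : ℝ) : ℝ := (1 / γ) * log (exp (γ * x) + 1)

theorem hasDerivAt_softplus {γ : ℝ} (hγ : γ ≠ 0) (x : ℝ) :
    HasDerivAt (softplus γ) (sigmoid (γ * x)) x := by
  refine ((((hasDerivAt_id' x).const_mul γ).exp.add_const 1).log (by positivity)).const_mul (1 / γ)
    |>.congr_deriv ?_
  rw [sigmoid_def, exp_neg]
  field_simp

theorem hasDerivAt_sigmoid_const_mul (γ x : ℝ) :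
    HasDerivAt (fun y => sigmoid (γ * y)) (γ * (sigmoid (γ * x) * (1 - sigmoid (γ * x)))) x := by
  have h := (hasDerivAt_sigmoid (γ * x)).comp x ((hasDerivAt_id' x).const_mul γ)
  rwa [mul_one, mul_comm] at h

theorem sigmoid_mul_one_sub_sigmoid_le (x : ℝ) : sigmoid x * (1 - sigmoid x) ≤ 1 / 4 := by
  nlinarith [sq_nonneg (sigmoid x - 1 / 2)]

theorem abs_const_mul_sigmoid_mul_one_sub_sigmoid_le {γ : ℝ} (hγ : 0 ≤ γ) (x : ℝ) :
    |γ * (sigmoid x * (1 - sigmoid x))| ≤ γ := by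
  have h0 : 0 ≤ sigmoid x * (1 - sigmoid x) :=
    mul_nonneg (sigmoid_nonneg x) (sub_nonneg.mpr (sigmoid_le_one x))
  rw [abs_of_nonneg (mul_nonneg hγ h0)]
  nlinarith [sigmoid_mul_one_sub_sigmoid_le x]

section SecondPartial

variable {E : Type*} [NormedAddCommGroup E] [NormedSpace ℝ E]

theorem fderiv_fderiv_comp_apply {s s' : ℝ → ℝ} {d : ℝ} {g : E → ℝ} {θ : E} (v w : E)
    (hs : ∀ x, HasDerivAt s (s' x) x) (hs' : HasDerivAt s' d (g θ))
    (hg : Differentiable ℝ g) (hgv : DifferentiableAt ℝ (fun η => fderiv ℝ g η v) θ) :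
    fderiv ℝ (fun η => fderiv ℝ (fun x => s (g x)) η v) θ w =
      s' (g θ) * fderiv ℝ (fun η => fderiv ℝ g η v) θ w + d * fderiv ℝ g θ v * fderiv ℝ g θ w := by
  have first_partial :
      (fun η => fderiv ℝ (fun x => s (g x)) η v) = fun η => s' (g η) * fderiv ℝ g η v := by
    funext η
    have h : HasFDerivAt (fun x => s (g x)) (s' (g η) • fderiv ℝ g η) η :=
      (hs (g η)).comp_hasFDerivAt η (hg η).hasFDerivAt
    rw [h.fderiv]
    rfl
  have second_partial : HasFDerivAt (fun η => s' (g η) * fderiv ℝ g η v)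
      (s' (g θ) • fderiv ℝ (fun η => fderiv ℝ g η v) θ + fderiv ℝ g θ v • d • fderiv ℝ g θ) θ :=
    (hs'.comp_hasFDerivAt θ (hg θ).hasFDerivAt).mul hgv.hasFDerivAt
  rw [first_partial, second_partial.fderiv]
  simp only [add_apply, smul_apply, smul_eq_mul]
  ring

theorem abs_fderiv_fderiv_comp_apply_le {s s' : ℝ → ℝ} {d : ℝ} {g : E → ℝ} {θ : E} {v w : E}
    {L c A A' B : ℝ} (hs : ∀ x, HasDerivAt s (s' x) x) (hs' : HasDerivAt s' d (g θ))
    (hg : Differentiable ℝ g) (hgv : DifferentiableAt ℝ (fun η => fderiv ℝ g η v) θ)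
    (hL : |s' (g θ)| ≤ L) (hc : |d| ≤ c) (hA : |fderiv ℝ g θ v| ≤ A)
    (hA' : |fderiv ℝ g θ w| ≤ A') (hB : |fderiv ℝ (fun η => fderiv ℝ g η v) θ w| ≤ B) :
    |fderiv ℝ (fun η => fderiv ℝ (fun x => s (g x)) η v) θ w| ≤ L * B + c * A * A' := by
  rw [fderiv_fderiv_comp_apply v w hs hs' hg hgv]
  have hL0 : 0 ≤ L := (abs_nonneg _).trans hL
  have hc0 : 0 ≤ c := (abs_nonneg _).trans hc
  have hcA : 0 ≤ c * A := mul_nonneg hc0 ((abs_nonneg _).trans hA)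
  calc _ ≤ |s' (g θ)| * |fderiv ℝ (fun η => fderiv ℝ g η v) θ w|
        + |d| * |fderiv ℝ g θ v| * |fderiv ℝ g θ w| := by
        simp only [← abs_mul]
        exact abs_add_le _ _
    _ ≤ L * B + c * A * A' := by gcongr

end SecondPartial

/-- Second-partial bound for the softplus composition: if `g : ℝʳ → ℝ` is
twice differentiable with `|∂g/∂θ_i| ≤ a i` and `|∂²g/∂θ_i∂θ_j| ≤ b i j`
everywhere, and `F(θ) = s_γ(g(θ))` with `s_γ(x) = (1/γ)ln(e^{γx}+1)`, `γ > 0`,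
then `|∂²F/∂θ_i∂θ_j| ≤ b i j + γ · a i · a j` everywhere. -/
theorem softplus_composition_second_partial_bound (r : ℕ)
    (g : EuclideanSpace ℝ (Fin r) → ℝ) (hg : ContDiff ℝ 2 g)
    (γ : ℝ) (hγ : 0 < γ) (a : Fin r → ℝ) (b : Fin r → Fin r → ℝ)
    (ha : ∀ (θ : EuclideanSpace ℝ (Fin r)) (i : Fin r),
      |fderiv ℝ g θ (EuclideanSpace.single i (1 : ℝ))| ≤ a i)
    (hb : ∀ (θ : EuclideanSpace ℝ (Fin r)) (i j : Fin r),
      |fderiv ℝ (fun η => fderiv ℝ g η (EuclideanSpace.single i (1 : ℝ))) θ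
          (EuclideanSpace.single j (1 : ℝ))| ≤ b i j) :
    ∀ (θ : EuclideanSpace ℝ (Fin r)) (i j : Fin r),
      |fderiv ℝ (fun η => fderiv ℝ
          (fun x => (1 / γ) * Real.log (Real.exp (γ * g x) + 1)) η
          (EuclideanSpace.single i (1 : ℝ))) θ
          (EuclideanSpace.single j (1 : ℝ))| ≤ b i j + γ * a i * a j := by
  intro θ i j
  set vi := EuclideanSpace.single i (1 : ℝ)
  set vj := EuclideanSpace.single j (1 : ℝ)
  have hgd : Differentiable ℝ g := hg.differentiable two_ne_zero
  have hgv : DifferentiableAt ℝ (fun η => fderiv ℝ g η vi) θ :=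
    ((hg.fderiv_right one_add_one_eq_two.le).differentiable one_ne_zero).clm_apply
      (differentiable_const vi) θ
  have hσ : |sigmoid (γ * g θ)| ≤ 1 := by
    rw [abs_of_nonneg (sigmoid_nonneg _)]
    exact sigmoid_le_one _
  change |fderiv ℝ (fun η => fderiv ℝ (fun x => softplus γ (g x)) η vi) θ vj| ≤ _
  simpa only [one_mul] using abs_fderiv_fderiv_comp_apply_le (hasDerivAt_softplus hγ.ne')
    (hasDerivAt_sigmoid_const_mul γ (g θ)) hgd hgv hσ
    (abs_const_mul_sigmoid_mul_one_sub_sigmoid_le hγ.le (γ * g θ)) (ha θ i) (ha θ j) (hb θ i j)
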